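/- There is a reduction from the halting problem for 2-register Minsky machines to the reachability problem for the class MM of λEH programs; consequently, reachability for MM (and hence for ⊢_ST-typable finitary PCF with effect handlers, since every program in MM is ⊢_ST-typable with Σ(succ) = (unit→unit) → unit) is undecidable: a 2-register Minsky machine halts from configuration (q₀,0,0) if and only if the corresponding MM program evaluates to return true. -/

import Mathlib

namespace LEH

/-! ## Syntax of λEH (finitary PCF with effect handlers), extended with records,
    in de Bruijn representation.  A handler is represented by its return clause
    (one binder) and, for each operation name `o : ℕ`, an operation clause
    (two binders: the parameter `x` at index 1 and the continuation `k` at index 0). -/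

mutual
inductive Val : Type
| var (n : ℕ)
| unit
| tt
| ff
| lam (c : Comp)
| fix (v : Val)              -- rec x = v
| record (f : ℕ → Val)
inductive Comp : Type
| ret (v : Val)
| op (o : ℕ) (v : Val)
| app (v₁ v₂ : Val)
| ite (v : Val) (c₁ c₂ : Comp)
| letin (c₁ c₂ : Comp)
| handle (hret : Comp) (hops : ℕ → Comp) (c : Comp)
| proj (v : Val) (l : ℕ)
end

def liftR (ξ : ℕ → ℕ) : ℕ → ℕ
| 0 => 0
| n+1 => ξ n + 1

mutual
def renameV (ξ : ℕ → ℕ) : Val → Val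
| .var n => .var (ξ n)
| .unit => .unit
| .tt => .tt
| .ff => .ff
| .lam c => .lam (renameC (liftR ξ) c)
| .fix v => .fix (renameV (liftR ξ) v)
| .record f => .record (fun o => renameV ξ (f o))
def renameC (ξ : ℕ → ℕ) : Comp → Comp
| .ret v => .ret (renameV ξ v)
| .op o v => .op o (renameV ξ v)
| .app v₁ v₂ => .app (renameV ξ v₁) (renameV ξ v₂)
| .ite v c₁ c₂ => .ite (renameV ξ v) (renameC ξ c₁) (renameC ξ c₂)
| .letin c₁ c₂ => .letin (renameC ξ c₁) (renameC (liftR ξ) c₂)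
| .handle r ops c =>
    .handle (renameC (liftR ξ) r) (fun o => renameC (liftR (liftR ξ)) (ops o)) (renameC ξ c)
| .proj v l => .proj (renameV ξ v) l
end

def liftS (σ : ℕ → Val) : ℕ → Val
| 0 => .var 0
| n+1 => renameV Nat.succ (σ n)

mutual
def substV (σ : ℕ → Val) : Val → Val
| .var n => σ n
| .unit => .unit
| .tt => .tt
| .ff => .ff
| .lam c => .lam (substC (liftS σ) c)
| .fix v => .fix (substV (liftS σ) v)
| .record f => .record (fun o => substV σ (f o))
def substC (σ : ℕ → Val) : Comp → Comp
| .ret v => .ret (substV σ v)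
| .op o v => .op o (substV σ v)
| .app v₁ v₂ => .app (substV σ v₁) (substV σ v₂)
| .ite v c₁ c₂ => .ite (substV σ v) (substC σ c₁) (substC σ c₂)
| .letin c₁ c₂ => .letin (substC σ c₁) (substC (liftS σ) c₂)
| .handle r ops c =>
    .handle (substC (liftS σ) r) (fun o => substC (liftS (liftS σ)) (ops o)) (substC σ c)
| .proj v l => .proj (substV σ v) l
end

/-- substitution of a single value for de Bruijn index 0 -/
def sub1 (v : Val) : ℕ → Val
| 0 => v
| n+1 => .var n

/-- substitution of two values: index 1 ↦ `x` (operation parameter),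
    index 0 ↦ `k` (captured continuation) -/
def sub2 (x k : Val) : ℕ → Val
| 0 => k
| 1 => x
| n+2 => .var n

def subst1C (c : Comp) (v : Val) : Comp := substC (sub1 v) c
def subst1V (w : Val) (v : Val) : Val := substV (sub1 v) w

/-! ## Evaluation contexts and small-step operational semantics -/

inductive EC : Type
| hole
| letE (E : EC) (c : Comp)

def plug : EC → Comp → Comp
| .hole, c => c
| .letE E c₂, c => .letin (plug E c) c₂

def renameE (ξ : ℕ → ℕ) : EC → EC
| .hole => .hole
| .letE E c => .letE (renameE ξ E) (renameC (liftR ξ) c)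

/-- the captured delimited continuation `λ y. with h handle E[return y]` -/
def contOf (r : Comp) (ops : ℕ → Comp) (E : EC) : Val :=
  .lam (.handle (renameC (liftR Nat.succ) r)
    (fun o => renameC (liftR (liftR Nat.succ)) (ops o))
    (plug (renameE Nat.succ E) (.ret (.var 0))))

inductive Step : Comp → Comp → Prop
| letc {c₁ c₂ c} : Step c₁ c₂ → Step (.letin c₁ c) (.letin c₂ c)
| letret {v c} : Step (.letin (.ret v) c) (subst1C c v)
| lamapp {c v} : Step (.app (.lam c) v) (subst1C c v)
| fixapp {v v'} : Step (.app (.fix v) v') (.app (subst1V v (.fix v)) v')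
| iftrue {c₁ c₂} : Step (.ite .tt c₁ c₂) c₁
| iffalse {c₁ c₂} : Step (.ite .ff c₁ c₂) c₂
| han {r ops c c'} : Step c c' → Step (.handle r ops c) (.handle r ops c')
| hret {r ops v} : Step (.handle r ops (.ret v)) (subst1C r v)
| hop {r ops E o v} :
    Step (.handle r ops (plug E (.op o v)))
      (substC (sub2 v (contOf r ops E)) (ops o))
| projr {f l} : Step (.proj (.record f) l) (.ret (f l))

abbrev StepStar : Comp → Comp → Prop := Relation.ReflTransGen Step
abbrev StepPlus : Comp → Comp → Prop := Relation.TransGen Step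

/-! ## ATM types and subtyping -/

mutual
inductive VTy : Type
| unit
| bool
| arrow (τ : VTy) (ρ : CTy)
inductive CTy : Type
| pure (τ : VTy)
| eff (τ : VTy) (ρ₁ ρ₂ : CTy)
end

mutual
inductive SubV : VTy → VTy → Prop
| unit : SubV .unit .unit
| bool : SubV .bool .bool
| arrow {τ₁ τ₂ ρ₁ ρ₂} : SubV τ₂ τ₁ → SubC ρ₁ ρ₂ → SubV (.arrow τ₁ ρ₁) (.arrow τ₂ ρ₂)
inductive SubC : CTy → CTy → Prop
| pure {τ₁ τ₂} : SubV τ₁ τ₂ → SubC (.pure τ₁) (.pure τ₂)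
| ipure {τ₁ τ₂ ρ₁ ρ₂ ρ₁' ρ₂'} :
    SubV τ₁ τ₂ → SubC ρ₂ ρ₁ → SubC ρ₁' ρ₂' → SubC (.eff τ₁ ρ₁ ρ₁') (.eff τ₂ ρ₂ ρ₂')
| embed {τ₁ τ₂ ρ₁ ρ₂} : SubV τ₁ τ₂ → SubC ρ₁ ρ₂ → SubC (.pure τ₁) (.eff τ₂ ρ₁ ρ₂)
end

/-- An operation signature Σ: each operation `o` has type
    `arg o → res o / ans1 o ⇒ ans2 o`. -/
structure Sig where
  arg : ℕ → VTy
  res : ℕ → VTy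
  ans1 : ℕ → CTy
  ans2 : ℕ → CTy

/-! ## The ATM type system ⊢_ATM -/

mutual
inductive TV : Sig → List VTy → Val → VTy → Prop
| unit {S Γ} : TV S Γ .unit .unit
| tt {S Γ} : TV S Γ .tt .bool
| ff {S Γ} : TV S Γ .ff .bool
| var {S Γ n τ} : Γ[n]? = some τ → TV S Γ (.var n) τ
| lam {S Γ τ c ρ} : TC S (τ :: Γ) c ρ → TV S Γ (.lam c) (.arrow τ ρ)
| fix {S Γ τ v} : TV S (τ :: Γ) v τ → TV S Γ (.fix v) τ
| vsub {S Γ v τ τ'} : TV S Γ v τ → SubV τ τ' → TV S Γ v τ'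
inductive TC : Sig → List VTy → Comp → CTy → Prop
| ret {S Γ v τ} : TV S Γ v τ → TC S Γ (.ret v) (.pure τ)
| app {S Γ v₁ v₂ τ ρ} : TV S Γ v₁ (.arrow τ ρ) → TV S Γ v₂ τ → TC S Γ (.app v₁ v₂) ρ
| ite {S Γ v c₁ c₂ ρ} :
    TV S Γ v .bool → TC S Γ c₁ ρ → TC S Γ c₂ ρ → TC S Γ (.ite v c₁ c₂) ρ
| letP {S Γ c₁ c₂ τ₁ τ₂} :
    TC S Γ c₁ (.pure τ₁) → TC S (τ₁ :: Γ) c₂ (.pure τ₂) →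
    TC S Γ (.letin c₁ c₂) (.pure τ₂)
| letIp {S Γ c₁ c₂ τ₁ τ₂ ρ₁ ρ₁' ρ₂} :
    TC S Γ c₁ (.eff τ₁ ρ₁ ρ₁') → TC S (τ₁ :: Γ) c₂ (.eff τ₂ ρ₂ ρ₁) →
    TC S Γ (.letin c₁ c₂) (.eff τ₂ ρ₂ ρ₁')
| op {S Γ o v} : TV S Γ v (S.arg o) → TC S Γ (.op o v) (.eff (S.res o) (S.ans1 o) (S.ans2 o))
| handle {S Γ r ops c τ ρ ρ'} :
    (∀ o, TC S (.arrow (S.res o) (S.ans1 o) :: S.arg o :: Γ) (ops o) (S.ans2 o)) →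
    TC S (τ :: Γ) r ρ →
    TC S Γ c (.eff τ ρ ρ') →
    TC S Γ (.handle r ops c) ρ'
| csub {S Γ c ρ ρ'} : TC S Γ c ρ → SubC ρ ρ' → TC S Γ c ρ'
end

/-! ## Simple types and the simple type system ⊢_ST (on λEH with records).
    `STy.sig` is the record type `⟦Σ⟧`; the system is parametrized by an
    interpretation `I : ℕ → STy` of its fields and by an operation
    signature `SS`. -/

inductive STy : Type
| unit
| bool
| arrow (σ₁ σ₂ : STy)
| sig

structure SigS where
  arg : ℕ → STy
  res : ℕ → STy

mutual
inductive SV : (ℕ → STy) → SigS → List STy → Val → STy → Prop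
| unit {I SS Γ} : SV I SS Γ .unit .unit
| tt {I SS Γ} : SV I SS Γ .tt .bool
| ff {I SS Γ} : SV I SS Γ .ff .bool
| var {I SS Γ n σ} : Γ[n]? = some σ → SV I SS Γ (.var n) σ
| lam {I SS Γ σ c σ'} : SC I SS (σ :: Γ) c σ' → SV I SS Γ (.lam c) (.arrow σ σ')
| fix {I SS Γ σ v} : SV I SS (σ :: Γ) v σ → SV I SS Γ (.fix v) σ
| record {I SS Γ f} : (∀ o, SV I SS Γ (f o) (I o)) → SV I SS Γ (.record f) .sig
inductive SC : (ℕ → STy) → SigS → List STy → Comp → STy → Prop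
| ret {I SS Γ v σ} : SV I SS Γ v σ → SC I SS Γ (.ret v) σ
| app {I SS Γ v₁ v₂ σ σ'} :
    SV I SS Γ v₁ (.arrow σ σ') → SV I SS Γ v₂ σ → SC I SS Γ (.app v₁ v₂) σ'
| ite {I SS Γ v c₁ c₂ σ} :
    SV I SS Γ v .bool → SC I SS Γ c₁ σ → SC I SS Γ c₂ σ → SC I SS Γ (.ite v c₁ c₂) σ
| letin {I SS Γ c₁ c₂ σ σ'} :
    SC I SS Γ c₁ σ → SC I SS (σ :: Γ) c₂ σ' → SC I SS Γ (.letin c₁ c₂) σ'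
| op {I SS Γ o v} : SV I SS Γ v (SS.arg o) → SC I SS Γ (.op o v) (SS.res o)
| handle {I SS Γ r ops c σ σ'} :
    SC I SS (σ :: Γ) r σ' →
    (∀ o, SC I SS (.arrow (SS.res o) σ' :: SS.arg o :: Γ) (ops o) σ') →
    SC I SS Γ c σ →
    SC I SS Γ (.handle r ops c) σ'
| proj {I SS Γ v l} : SV I SS Γ v .sig → SC I SS Γ (.proj v l) (I l)
end

/-! ## Derivation trees (Type-valued) for subtyping and ATM typing,
    used by the typing-derivation-directed CPS transformation -/

mutual
inductive SubVD : VTy → VTy → Type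
| unit : SubVD .unit .unit
| bool : SubVD .bool .bool
| arrow {τ₁ τ₂ ρ₁ ρ₂} : SubVD τ₂ τ₁ → SubCD ρ₁ ρ₂ → SubVD (.arrow τ₁ ρ₁) (.arrow τ₂ ρ₂)
inductive SubCD : CTy → CTy → Type
| pure {τ₁ τ₂} : SubVD τ₁ τ₂ → SubCD (.pure τ₁) (.pure τ₂)
| ipure {τ₁ τ₂ ρ₁ ρ₂ ρ₁' ρ₂'} :
    SubVD τ₁ τ₂ → SubCD ρ₂ ρ₁ → SubCD ρ₁' ρ₂' → SubCD (.eff τ₁ ρ₁ ρ₁') (.eff τ₂ ρ₂ ρ₂')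
| embed {τ₁ τ₂ ρ₁ ρ₂} : SubVD τ₁ τ₂ → SubCD ρ₁ ρ₂ → SubCD (.pure τ₁) (.eff τ₂ ρ₁ ρ₂)
end

mutual
inductive TVD : Sig → List VTy → Val → VTy → Type
| unit {S Γ} : TVD S Γ .unit .unit
| tt {S Γ} : TVD S Γ .tt .bool
| ff {S Γ} : TVD S Γ .ff .bool
| var {S Γ τ} (n : ℕ) : Γ[n]? = some τ → TVD S Γ (.var n) τ
| lam {S Γ τ c ρ} : TCD S (τ :: Γ) c ρ → TVD S Γ (.lam c) (.arrow τ ρ)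
| fix {S Γ τ v} : TVD S (τ :: Γ) v τ → TVD S Γ (.fix v) τ
| vsub {S Γ v τ τ'} : TVD S Γ v τ → SubVD τ τ' → TVD S Γ v τ'
inductive TCD : Sig → List VTy → Comp → CTy → Type
| ret {S Γ v τ} : TVD S Γ v τ → TCD S Γ (.ret v) (.pure τ)
| app {S Γ v₁ v₂ τ ρ} : TVD S Γ v₁ (.arrow τ ρ) → TVD S Γ v₂ τ → TCD S Γ (.app v₁ v₂) ρ
| ite {S Γ v c₁ c₂ ρ} :
    TVD S Γ v .bool → TCD S Γ c₁ ρ → TCD S Γ c₂ ρ → TCD S Γ (.ite v c₁ c₂) ρ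
| letP {S Γ c₁ c₂ τ₁ τ₂} :
    TCD S Γ c₁ (.pure τ₁) → TCD S (τ₁ :: Γ) c₂ (.pure τ₂) →
    TCD S Γ (.letin c₁ c₂) (.pure τ₂)
| letIp {S Γ c₁ c₂ τ₁ τ₂ ρ₁ ρ₁' ρ₂} :
    TCD S Γ c₁ (.eff τ₁ ρ₁ ρ₁') → TCD S (τ₁ :: Γ) c₂ (.eff τ₂ ρ₂ ρ₁) →
    TCD S Γ (.letin c₁ c₂) (.eff τ₂ ρ₂ ρ₁')
| op {S Γ} (o : ℕ) {v} :
    TVD S Γ v (S.arg o) → TCD S Γ (.op o v) (.eff (S.res o) (S.ans1 o) (S.ans2 o))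
| handle {S Γ r ops c τ ρ ρ'} :
    (∀ o, TCD S (.arrow (S.res o) (S.ans1 o) :: S.arg o :: Γ) (ops o) (S.ans2 o)) →
    TCD S (τ :: Γ) r ρ →
    TCD S Γ c (.eff τ ρ ρ') →
    TCD S Γ (.handle r ops c) ρ'
| csub {S Γ c ρ ρ'} : TCD S Γ c ρ → SubCD ρ ρ' → TCD S Γ c ρ'
end

/-! ## The CPS transformation -/

/-! CPS transformation of ATM value and computation types into simple types;
    `⟦τ/ρ₁⇒ρ₂⟧ = ⟦Σ⟧ → (⟦τ⟧ → ⟦ρ₁⟧) → ⟦ρ₂⟧`, where `⟦Σ⟧` is `STy.sig`. -/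
mutual
def cpsT : VTy → STy
| .unit => .unit
| .bool => .bool
| .arrow τ ρ => .arrow (cpsT τ) (cpsCT ρ)
def cpsCT : CTy → STy
| .pure τ => cpsT τ
| .eff τ ρ₁ ρ₂ => .arrow .sig (.arrow (.arrow (cpsT τ) (cpsCT ρ₁)) (cpsCT ρ₂))
end

/-- the field types of the record type `⟦Σ⟧` -/
def opSTy (S : Sig) : ℕ → STy := fun o =>
  .arrow (cpsT (S.arg o)) (.arrow (.arrow (cpsT (S.res o)) (cpsCT (S.ans1 o))) (cpsCT (S.ans2 o)))

/-- application of a computation to a computation (left-to-right sequencing sugar) -/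
def apc (c₁ c₂ : Comp) : Comp :=
  .letin c₁ (.letin (renameC Nat.succ c₂) (.app (.var 1) (.var 0)))

/-! CPS transformation of subtyping derivations, given as the coercion
    they induce on (already-transformed) terms; the static applications `@`
    of the paper are performed on the fly. -/
mutual
def coerceV : {τ τ' : VTy} → SubVD τ τ' → Val → Val
| _, _, .unit, v => v
| _, _, .bool, v => v
| _, _, .arrow d21 d12, f =>
    .lam (coerceC d12 (.app (renameV Nat.succ f) (coerceV d21 (.var 0))))
def coerceC : {ρ ρ' : CTy} → SubCD ρ ρ' → Comp → Comp
| _, _, .pure d, c => .letin c (.ret (coerceV d (.var 0)))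
| _, _, .ipure dT d21 d12, c =>
    .ret (.lam (.ret (.lam (coerceC d12
      (apc (apc (renameC (fun n => n + 2) c) (.ret (.var 1)))
        (.ret (.lam (coerceC d21 (apc (.ret (.var 1)) (.ret (coerceV dT (.var 0))))))))))))
| _, _, .embed dT dR, c =>
    .ret (.lam (.ret (.lam (coerceC dR
      (.letin (renameC (fun n => n + 2) c)
        (apc (.ret (.var 1)) (.ret (coerceV dT (.var 0)))))))))
end

/-! the typing-derivation-directed CPS transformation -/
mutual
def cpsV {S : Sig} : {Γ : List VTy} → {v : Val} → {τ : VTy} → TVD S Γ v τ → Val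
| _, _, _, .unit => .unit
| _, _, _, .tt => .tt
| _, _, _, .ff => .ff
| _, _, _, .var n _ => .var n
| _, _, _, .lam D => .lam (cpsC D)
| _, _, _, .fix D => .fix (cpsV D)
| _, _, _, .vsub D d => coerceV d (cpsV D)
def cpsC {S : Sig} : {Γ : List VTy} → {c : Comp} → {ρ : CTy} → TCD S Γ c ρ → Comp
| _, _, _, .ret D => .ret (cpsV D)
| _, _, _, .app D₁ D₂ => .app (cpsV D₁) (cpsV D₂)
| _, _, _, .ite Dv D₁ D₂ => .ite (cpsV Dv) (cpsC D₁) (cpsC D₂)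
| _, _, _, .letP D₁ D₂ => .letin (cpsC D₁) (cpsC D₂)
| _, _, _, .letIp D₁ D₂ =>
    .ret (.lam (.ret (.lam (apc (apc (renameC (fun n => n + 2) (cpsC D₁)) (.ret (.var 1)))
      (.ret (.lam (apc (apc (renameC (liftR (fun n => n + 2)) (cpsC D₂)) (.ret (.var 2)))
        (.ret (.var 1)))))))))
| _, _, _, .op o Dv =>
    .ret (.lam (.ret (.lam (apc (apc (.proj (.var 1) o)
      (.ret (renameV (fun n => n + 2) (cpsV Dv)))) (.ret (.var 0))))))
| _, _, _, .handle Dops Dret Dc =>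
    apc (apc (cpsC Dc) (.ret (.record (fun o => .lam (.ret (.lam (cpsC (Dops o))))))))
      (.ret (.lam (cpsC Dret)))
| _, _, _, .csub D d => coerceC d (cpsC D)
end

/-- `⟦D⟧ v_h v_k`: applying a CPS-transformed effectful computation to a
    (translated) handler record and continuation -/
def capp2 (c : Comp) (vh vk : Val) : Comp := apc (apc c (.ret vh)) (.ret vk)

/-! ## Effect-handler-freeness and rec-freeness -/

mutual
def hfV : Val → Prop
| .var _ => True
| .unit => True
| .tt => True
| .ff => True
| .lam c => hfC c
| .fix v => hfV v
| .record f => ∀ o, hfV (f o)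
def hfC : Comp → Prop
| .ret v => hfV v
| .op _ _ => False
| .app v₁ v₂ => hfV v₁ ∧ hfV v₂
| .ite v c₁ c₂ => hfV v ∧ hfC c₁ ∧ hfC c₂
| .letin c₁ c₂ => hfC c₁ ∧ hfC c₂
| .handle _ _ _ => False
| .proj v _ => hfV v
end

mutual
def recFreeV : Val → Prop
| .var _ => True
| .unit => True
| .tt => True
| .ff => True
| .lam c => recFreeC c
| .fix _ => False
| .record f => ∀ o, recFreeV (f o)
def recFreeC : Comp → Prop
| .ret v => recFreeV v
| .op _ v => recFreeV v
| .app v₁ v₂ => recFreeV v₁ ∧ recFreeV v₂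
| .ite v c₁ c₂ => recFreeV v ∧ recFreeC c₁ ∧ recFreeC c₂
| .letin c₁ c₂ => recFreeC c₁ ∧ recFreeC c₂
| .handle r ops c => recFreeC r ∧ (∀ o, recFreeC (ops o)) ∧ recFreeC c
| .proj v _ => recFreeV v
end

end LEH

namespace LEH

/-! ## 2-register Minsky machines -/

inductive MInstr (N : ℕ) : Type
| inc (i : Fin 2) (j : Fin N)
| dec (i : Fin 2) (j m : Fin N)
| halt

abbrev MCfg (N : ℕ) := Fin N × ℕ × ℕ

inductive MStep {N : ℕ} (M : Fin N → MInstr N) : MCfg N → MCfg N → Prop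
| inc0 {q j a b} : M q = .inc 0 j → MStep M (q, a, b) (j, a+1, b)
| inc1 {q j a b} : M q = .inc 1 j → MStep M (q, a, b) (j, a, b+1)
| dec0z {q j m b} : M q = .dec 0 j m → MStep M (q, 0, b) (j, 0, b)
| dec0s {q j m a b} : M q = .dec 0 j m → MStep M (q, a+1, b) (m, a, b)
| dec1z {q j m a} : M q = .dec 1 j m → MStep M (q, a, 0) (j, a, 0)
| dec1s {q j m a b} : M q = .dec 1 j m → MStep M (q, a, b+1) (m, a, b)

/-- the machine halts when started in state `q₀ = 0` with both registers `0` -/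
def MHalts {N : ℕ} (M : Fin (N+1) → MInstr (N+1)) : Prop :=
  ∃ q a b, Relation.ReflTransGen (MStep M) (0, 0, 0) (q, a, b) ∧ M q = MInstr.halt

/-! ## The class MM of λEH programs encoding Minsky machines.
    Registers are encoded as functions `unit → unit` built by nesting the
    operation `succ` (operation name `0`); machine states are mutually
    recursive functions `f₀,…,fₙ`. -/

/-- de Bruijn environment recording the indices of `f₀,…,fₙ` and of the two
    register variables `x₀, x₁` -/
structure REnv (N : ℕ) where
  f : Fin N → ℕ
  x0 : ℕ
  x1 : ℕ

/-- `f_j x₀ x₁` -/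
def callF (fj a b : ℕ) : Comp :=
  .letin (.app (.var fj) (.var a)) (.app (.var 0) (.var (b+1)))

/-- translation of a single Minsky instruction:
    `inc` is `let x_i = λy. succ x_i in f_j x₀ x₁`;
    `dec` is `with {return x = f_j x₀ x₁, succ x_i k = f_m x₀ x₁} handle x_i ()`;
    `halt` is `()` -/
def instrC {N : ℕ} (ins : MInstr N) (e : REnv N) : Comp :=
  match ins with
  | .halt => .ret .unit
  | .inc i j =>
      if i = 0 then
        .letin (.ret (.lam (.op 0 (.var (e.x0 + 1))))) (callF (e.f j + 1) 0 (e.x1 + 1))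
      else
        .letin (.ret (.lam (.op 0 (.var (e.x1 + 1))))) (callF (e.f j + 1) (e.x0 + 1) 0)
  | .dec i j m =>
      .handle (callF (e.f j + 1) (e.x0 + 1) (e.x1 + 1))
        (fun _ =>
          if i = 0 then callF (e.f m + 2) 1 (e.x1 + 2)
          else callF (e.f m + 2) (e.x0 + 2) 1)
        (.app (.var (if i = 0 then e.x0 else e.x1)) .unit)

/-- shift the environment under one extra binder which binds `f_j` -/
def bumpF {N : ℕ} (e : REnv N) (j : Fin N) : REnv N :=
  ⟨fun j' => if j' = j then 0 else e.f j' + 1, e.x0 + 1, e.x1 + 1⟩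

/-- the `mrec` syntactic sugar: each `f_j` in `todo` is bound by a `let` to
    `rec f_j = λx₀.λx₁. (mrec (all-others) in body of f_j)`; `fuel` bounds the
    recursion depth (any `fuel ≥ (N+1)²` suffices for the full unfolding). -/
def mrecDefs {N : ℕ} (M : Fin N → MInstr N) :
    ℕ → List (Fin N) → List (Fin N) → REnv N → (REnv N → Comp) → Comp
| 0, _, _, e, k => k e
| fuel+1, full, todo, e, k =>
  match todo with
  | [] => k e
  | j :: td =>
      .letin (.ret (.fix (.lam (.ret (.lam
        (mrecDefs M fuel (full.erase j) (full.erase j)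
          ⟨fun j' => (bumpF e j).f j' + 2, 1, 0⟩
          (fun e' => instrC (M j) e')))))))
        (mrecDefs M fuel full td (bumpF e j) k)

/-- the MM program of a machine:
    `mrec f₀ = λx₀.λx₁.c₀ and … and fₙ = λx₀.λx₁.cₙ in (f₀ (λx.()) (λx.())); true` -/
def encodeMM {N : ℕ} (M : Fin (N+1) → MInstr (N+1)) : Comp :=
  mrecDefs M ((N + 2) * (N + 2)) (List.finRange (N+1)) (List.finRange (N+1))
    ⟨fun _ => 0, 0, 0⟩
    (fun e =>
      .letin (.letin (.app (.var (e.f 0)) (.lam (.ret .unit)))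
          (.app (.var 0) (.lam (.ret .unit))))
        (.ret .tt))

/-- the simple-type signature `Σ(succ) = (unit→unit) → unit` -/
def SSmm : SigS := ⟨fun _ => STy.arrow .unit .unit, fun _ => .unit⟩

end LEH

/-! Configurations `(q, a, b)` are simulated by the calls `f_q ⟦a⟧ ⟦b⟧`, where `⟦0⟧ = λ_. ()`
and `⟦n + 1⟧ = λ_. succ ⟦n⟧` (`numV`). Calling a runtime closure of `f_q` unfolds its `mrec` body
to instruction `q`; an increment wraps a register in one more `succ`, and a test
`with h handle x_i ()` either returns at once (register zero) or catches `succ` with the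
predecessor as argument. Hence every machine step is matched by at least one program step, and
a halting run makes the program return `true`. Conversely, the semantics is deterministic, so a
program reaching the stuck term `return true` cannot also be following the infinite simulation
of a machine that never halts. -/

theorem Relation.ReflTransGen.exists_step_of_progress {α : Type*} {r : α → α → Prop}
    (hr : Relator.RightUnique r) {I : α → Prop} (hI : ∀ a, I a → ∃ b, TransGen r a b ∧ I b)
    {a a₀ b : α} (ha₀ : ReflTransGen r a a₀) (h₀ : I a₀) (hab : ReflTransGen r a b) :
    ∃ c, r b c := by
  have hpres : ∀ {c c'}, (∃ d, ReflTransGen r c d ∧ I d) → r c c' →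
      ∃ d, ReflTransGen r c' d ∧ I d := by
    rintro c c' ⟨d, hcd, hd⟩ hcc'
    obtain ⟨d', hdd', hd'⟩ := hI d hd
    obtain ⟨x, hcx, hxd'⟩ := TransGen.head'_iff.1 (TransGen.trans_right hcd hdd')
    exact ⟨d', hr hcc' hcx ▸ hxd', hd'⟩
  obtain ⟨d, hbd, hd⟩ : ∃ d, ReflTransGen r b d ∧ I d := by
    induction hab with
    | refl => exact ⟨a₀, ha₀, h₀⟩
    | tail _ hst ih => exact hpres ih hst
  obtain ⟨d', hdd', -⟩ := hI d hd
  obtain ⟨c, hbc, -⟩ := TransGen.head'_iff.1 (TransGen.trans_right hbd hdd')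
  exact ⟨c, hbc⟩

theorem List.length_erase_sq_add_le {α : Type*} [DecidableEq α] {l : List α} {a : α}
    (h : a ∈ l) : (l.erase a).length ^ 2 + (l.erase a).length ≤ l.length ^ 2 := by
  rw [List.length_erase_of_mem h]
  obtain ⟨n, hn⟩ := Nat.exists_eq_add_one_of_ne_zero (List.length_pos_of_mem h).ne'
  rw [hn, Nat.add_sub_cancel]
  nlinarith

namespace LEH

theorem liftR_comp (ξ₂ ξ₁ : ℕ → ℕ) : liftR ξ₂ ∘ liftR ξ₁ = liftR (ξ₂ ∘ ξ₁) := by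
  funext n; cases n <;> rfl

mutual
theorem renameV_renameV : ∀ (v : Val) (ξ₂ ξ₁ : ℕ → ℕ),
    renameV ξ₂ (renameV ξ₁ v) = renameV (ξ₂ ∘ ξ₁) v
  | .var _, _, _ | .unit, _, _ | .tt, _, _ | .ff, _, _ => rfl
  | .lam c, _, _ => by simp only [renameV, renameC_renameC c, liftR_comp]
  | .fix v, _, _ => by simp only [renameV, renameV_renameV v, liftR_comp]
  | .record f, _, _ => by simp only [renameV, fun o => renameV_renameV (f o)]
theorem renameC_renameC : ∀ (c : Comp) (ξ₂ ξ₁ : ℕ → ℕ),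
    renameC ξ₂ (renameC ξ₁ c) = renameC (ξ₂ ∘ ξ₁) c
  | .ret v, _, _ | .op _ v, _, _ | .proj v _, _, _ => by simp only [renameC, renameV_renameV v]
  | .app v₁ v₂, _, _ => by simp only [renameC, renameV_renameV v₁, renameV_renameV v₂]
  | .ite v c₁ c₂, _, _ => by
    simp only [renameC, renameV_renameV v, renameC_renameC c₁, renameC_renameC c₂]
  | .letin c₁ c₂, _, _ => by
    simp only [renameC, renameC_renameC c₁, renameC_renameC c₂, liftR_comp]
  | .handle r ops c, _, _ => by
    simp only [renameC, renameC_renameC r, renameC_renameC c, fun o => renameC_renameC (ops o),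
      liftR_comp]
end

theorem liftS_comp_liftR (σ : ℕ → Val) (ξ : ℕ → ℕ) : liftS σ ∘ liftR ξ = liftS (σ ∘ ξ) := by
  funext n; cases n <;> rfl

mutual
theorem substV_renameV : ∀ (v : Val) (σ : ℕ → Val) (ξ : ℕ → ℕ),
    substV σ (renameV ξ v) = substV (σ ∘ ξ) v
  | .var _, _, _ | .unit, _, _ | .tt, _, _ | .ff, _, _ => rfl
  | .lam c, _, _ => by simp only [renameV, substV, substC_renameC c, liftS_comp_liftR]
  | .fix v, _, _ => by simp only [renameV, substV, substV_renameV v, liftS_comp_liftR]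
  | .record f, _, _ => by simp only [renameV, substV, fun o => substV_renameV (f o)]
theorem substC_renameC : ∀ (c : Comp) (σ : ℕ → Val) (ξ : ℕ → ℕ),
    substC σ (renameC ξ c) = substC (σ ∘ ξ) c
  | .ret v, _, _ | .op _ v, _, _ | .proj v _, _, _ => by
    simp only [renameC, substC, substV_renameV v]
  | .app v₁ v₂, _, _ => by simp only [renameC, substC, substV_renameV v₁, substV_renameV v₂]
  | .ite v c₁ c₂, _, _ => by
    simp only [renameC, substC, substV_renameV v, substC_renameC c₁, substC_renameC c₂]
  | .letin c₁ c₂, _, _ => by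
    simp only [renameC, substC, substC_renameC c₁, substC_renameC c₂, liftS_comp_liftR]
  | .handle r ops c, _, _ => by
    simp only [renameC, substC, substC_renameC r, substC_renameC c,
      fun o => substC_renameC (ops o), liftS_comp_liftR]
end

theorem renameV_comp_liftS (ξ : ℕ → ℕ) (σ : ℕ → Val) :
    renameV (liftR ξ) ∘ liftS σ = liftS (renameV ξ ∘ σ) := by
  funext n
  cases n with
  | zero => rfl
  | succ n => simp only [Function.comp, liftS, renameV_renameV]; rfl

mutual
theorem renameV_substV : ∀ (v : Val) (ξ : ℕ → ℕ) (σ : ℕ → Val),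
    renameV ξ (substV σ v) = substV (renameV ξ ∘ σ) v
  | .var _, _, _ | .unit, _, _ | .tt, _, _ | .ff, _, _ => rfl
  | .lam c, _, _ => by simp only [renameV, substV, renameC_substC c, renameV_comp_liftS]
  | .fix v, _, _ => by simp only [renameV, substV, renameV_substV v, renameV_comp_liftS]
  | .record f, _, _ => by simp only [renameV, substV, fun o => renameV_substV (f o)]
theorem renameC_substC : ∀ (c : Comp) (ξ : ℕ → ℕ) (σ : ℕ → Val),
    renameC ξ (substC σ c) = substC (renameV ξ ∘ σ) c
  | .ret v, _, _ | .op _ v, _, _ | .proj v _, _, _ => by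
    simp only [renameC, substC, renameV_substV v]
  | .app v₁ v₂, _, _ => by simp only [renameC, substC, renameV_substV v₁, renameV_substV v₂]
  | .ite v c₁ c₂, _, _ => by
    simp only [renameC, substC, renameV_substV v, renameC_substC c₁, renameC_substC c₂]
  | .letin c₁ c₂, _, _ => by
    simp only [renameC, substC, renameC_substC c₁, renameC_substC c₂, renameV_comp_liftS]
  | .handle r ops c, _, _ => by
    simp only [renameC, substC, renameC_substC r, renameC_substC c,
      fun o => renameC_substC (ops o), renameV_comp_liftS]
end

theorem substV_comp_liftS (σ₂ σ₁ : ℕ → Val) :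
    substV (liftS σ₂) ∘ liftS σ₁ = liftS (substV σ₂ ∘ σ₁) := by
  funext n
  cases n with
  | zero => rfl
  | succ n => simp only [Function.comp, liftS, substV_renameV, renameV_substV]; rfl

mutual
theorem substV_substV : ∀ (v : Val) (σ₂ σ₁ : ℕ → Val),
    substV σ₂ (substV σ₁ v) = substV (substV σ₂ ∘ σ₁) v
  | .var _, _, _ | .unit, _, _ | .tt, _, _ | .ff, _, _ => rfl
  | .lam c, _, _ => by simp only [substV, substC_substC c, substV_comp_liftS]
  | .fix v, _, _ => by simp only [substV, substV_substV v, substV_comp_liftS]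
  | .record f, _, _ => by simp only [substV, fun o => substV_substV (f o)]
theorem substC_substC : ∀ (c : Comp) (σ₂ σ₁ : ℕ → Val),
    substC σ₂ (substC σ₁ c) = substC (substV σ₂ ∘ σ₁) c
  | .ret v, _, _ | .op _ v, _, _ | .proj v _, _, _ => by simp only [substC, substV_substV v]
  | .app v₁ v₂, _, _ => by simp only [substC, substV_substV v₁, substV_substV v₂]
  | .ite v c₁ c₂, _, _ => by
    simp only [substC, substV_substV v, substC_substC c₁, substC_substC c₂]
  | .letin c₁ c₂, _, _ => by
    simp only [substC, substC_substC c₁, substC_substC c₂, substV_comp_liftS]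
  | .handle r ops c, _, _ => by
    simp only [substC, substC_substC r, substC_substC c, fun o => substC_substC (ops o),
      substV_comp_liftS]
end

theorem liftS_var : liftS Val.var = Val.var := by
  funext n; cases n <;> rfl

mutual
theorem substV_var : ∀ v : Val, substV Val.var v = v
  | .var _ | .unit | .tt | .ff => rfl
  | .lam c => by simp only [substV, liftS_var, substC_var c]
  | .fix v => by simp only [substV, liftS_var, substV_var v]
  | .record f => by simp only [substV, fun o => substV_var (f o)]
theorem substC_var : ∀ c : Comp, substC Val.var c = c
  | .ret v | .op _ v | .proj v _ => by simp only [substC, substV_var v]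
  | .app v₁ v₂ => by simp only [substC, substV_var v₁, substV_var v₂]
  | .ite v c₁ c₂ => by simp only [substC, substV_var v, substC_var c₁, substC_var c₂]
  | .letin c₁ c₂ => by simp only [substC, liftS_var, substC_var c₁, substC_var c₂]
  | .handle r ops c => by
    simp only [substC, liftS_var, substC_var r, substC_var c, fun o => substC_var (ops o)]
end

def consSub (v : Val) (σ : ℕ → Val) : ℕ → Val
  | 0 => v
  | n + 1 => σ n

theorem substV_sub1_renameV_succ (v w : Val) : substV (sub1 v) (renameV Nat.succ w) = w := by
  rw [substV_renameV]; exact substV_var w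

theorem substV_sub1_comp_liftS (v : Val) (σ : ℕ → Val) :
    substV (sub1 v) ∘ liftS σ = consSub v σ := by
  funext n
  cases n with
  | zero => rfl
  | succ n => exact substV_sub1_renameV_succ v (σ n)

theorem subst1C_substC_liftS (σ : ℕ → Val) (c : Comp) (v : Val) :
    subst1C (substC (liftS σ) c) v = substC (consSub v σ) c := by
  rw [subst1C, substC_substC, substV_sub1_comp_liftS]

theorem subst1V_substV_liftS (σ : ℕ → Val) (w v : Val) :
    subst1V (substV (liftS σ) w) v = substV (consSub v σ) w := by
  rw [subst1V, substV_substV, substV_sub1_comp_liftS]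

theorem substC_sub2_substC_liftS_liftS (x k : Val) (σ : ℕ → Val) (c : Comp) :
    substC (sub2 x k) (substC (liftS (liftS σ)) c) = substC (consSub k (consSub x σ)) c := by
  rw [substC_substC]
  congr 1
  funext n
  match n with
  | 0 | 1 => rfl
  | n + 2 =>
    show substV (sub2 x k) (renameV Nat.succ (renameV Nat.succ (σ n))) = σ n
    rw [renameV_renameV, substV_renameV]
    exact substV_var (σ n)

theorem StepStar.letin {c c' : Comp} (d : Comp) (h : StepStar c c') :
    StepStar (.letin c d) (.letin c' d) :=
  Relation.ReflTransGen.lift (fun c => Comp.letin c d) (fun _ _ => Step.letc) _ _ h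

theorem StepPlus.letin {c c' : Comp} (d : Comp) (h : StepPlus c c') :
    StepPlus (.letin c d) (.letin c' d) :=
  Relation.TransGen.lift (fun c => Comp.letin c d) (fun _ _ => Step.letc) _ _ h

theorem plug_op_ne_ret (E : EC) (o : ℕ) (v w : Val) : plug E (.op o v) ≠ .ret w := by
  cases E <;> simp [plug]

theorem not_step_plug_op (E : EC) (o : ℕ) (v : Val) {d : Comp} :
    ¬ Step (plug E (.op o v)) d := by
  induction E generalizing d with
  | hole => nofun
  | letE E c ih =>
    intro h
    generalize hc : plug (.letE E c) (.op o v) = x at h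
    cases h <;> simp only [plug, Comp.letin.injEq, reduceCtorEq] at hc
    case letc h => exact ih (hc.1 ▸ h)
    case letret => exact plug_op_ne_ret E o v _ hc.1

theorem plug_op_inj {E E' : EC} {o o' : ℕ} {v v' : Val}
    (h : plug E (.op o v) = plug E' (.op o' v')) : E = E' ∧ o = o' ∧ v = v' := by
  induction E generalizing E' with
  | hole =>
    cases E' with
    | hole => simp_all [plug]
    | letE E' c => simp [plug] at h
  | letE E c ih =>
    cases E' with
    | hole => simp [plug] at h
    | letE E' c' =>
      simp only [plug, Comp.letin.injEq] at h
      obtain ⟨rfl, rfl, rfl⟩ := ih h.1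
      exact ⟨by rw [h.2], rfl, rfl⟩

theorem Step.handle_cases {r : Comp} {ops : ℕ → Comp} {c d : Comp}
    (h : Step (.handle r ops c) d) :
    (∃ c', Step c c' ∧ d = .handle r ops c') ∨ (∃ v, c = .ret v ∧ d = subst1C r v) ∨
      ∃ E o v, c = plug E (.op o v) ∧ d = substC (sub2 v (contOf r ops E)) (ops o) := by
  cases h with
  | han h => exact .inl ⟨_, h, rfl⟩
  | hret => exact .inr (.inl ⟨_, rfl, rfl⟩)
  | hop => exact .inr (.inr ⟨_, _, _, rfl, rfl⟩)

theorem step_rightUnique : Relator.RightUnique Step := by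
  intro c d d' h h'
  induction h generalizing d' with
  | letc h ih =>
    cases h' with
    | letc h' => rw [ih h']
    | letret => nomatch h
  | letret =>
    cases h' with
    | letc h' => nomatch h'
    | letret => rfl
  | lamapp | fixapp | iftrue | iffalse | projr => cases h'; rfl
  | han h ih =>
    rcases h'.handle_cases with ⟨c', hc', rfl⟩ | ⟨v, rfl, -⟩ | ⟨E, o, v, rfl, -⟩
    · rw [ih hc']
    · nomatch h
    · exact absurd h (not_step_plug_op E o v)
  | hret =>
    rcases h'.handle_cases with ⟨c', hc', -⟩ | ⟨v, hv, rfl⟩ | ⟨E, o, v, hE, -⟩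
    · nomatch hc'
    · cases hv; rfl
    · exact absurd hE.symm (plug_op_ne_ret E o v _)
  | hop =>
    rcases h'.handle_cases with ⟨c', hc', -⟩ | ⟨v, hv, -⟩ | ⟨E, o, v, hE, rfl⟩
    · exact absurd hc' (not_step_plug_op _ _ _)
    · exact absurd hv (plug_op_ne_ret _ _ _ _)
    · obtain ⟨rfl, rfl, rfl⟩ := plug_op_inj hE
      rfl

def numV : ℕ → Val
  | 0 => .lam (.ret .unit)
  | n + 1 => .lam (.op 0 (numV n))

theorem renameV_numV (ξ : ℕ → ℕ) : ∀ n, renameV ξ (numV n) = numV n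
  | 0 => rfl
  | n + 1 => by simp only [numV, renameV, renameC, renameV_numV _ n]

theorem substV_numV (σ : ℕ → Val) : ∀ n, substV σ (numV n) = numV n
  | 0 => rfl
  | n + 1 => by simp only [numV, substV, substC, substV_numV _ n]

def callV (F A B : Val) : Comp :=
  .letin (.app F A) (.app (.var 0) (renameV Nat.succ B))

theorem substC_callF (σ : ℕ → Val) (fj a b : ℕ) :
    substC σ (callF fj a b) = callV (σ fj) (σ a) (σ b) :=
  rfl

theorem handle_app_numV_zero (r : Comp) (ops : ℕ → Comp) :
    StepPlus (.handle r ops (.app (numV 0) .unit)) (subst1C r .unit) :=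
  .tail (.single (.han .lamapp)) .hret

theorem handle_app_numV_succ (r : Comp) (ops : ℕ → Comp) (n : ℕ) :
    StepPlus (.handle r ops (.app (numV (n + 1)) .unit))
      (substC (sub2 (numV n) (contOf r ops .hole)) (ops 0)) := by
  have hcall : Step (.app (numV (n + 1)) .unit) (.op 0 (numV n)) := by
    refine (congrArg (Step _) ?_).mp Step.lamapp
    simp only [subst1C, substC, substV_numV]
  exact .tail (.single (.han hcall)) (.hop (E := .hole))

theorem instrC_stepPlus {N : ℕ} {M : Fin N → MInstr N} {q q' : Fin N} {a b a' b' : ℕ}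
    {γ : ℕ → Val} {e : REnv N} (h0 : γ e.x0 = numV a) (h1 : γ e.x1 = numV b)
    (hstep : MStep M (q, a, b) (q', a', b')) :
    StepPlus (substC γ (instrC (M q) e)) (callV (γ (e.f q')) (numV a') (numV b')) := by
  cases hstep with
  | inc0 h | inc1 h =>
    rw [h, instrC]
    simp only [Fin.isValue, ↓reduceIte, Fin.one_eq_zero_iff, OfNat.ofNat_ne_one]
    rw [substC, substC, substV, substC, substV, liftS]
    simp only [h0, h1, renameV_numV]
    refine .single ((congrArg (Step _) ?_).mp Step.letret)
    rw [subst1C_substC_liftS, substC_callF]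
    simp only [consSub, h0, h1]; rfl
  | dec0z h | dec0s h | dec1z h | dec1s h =>
    rw [h, instrC]
    simp only [Fin.isValue, ↓reduceIte, Fin.one_eq_zero_iff, OfNat.ofNat_ne_one]
    rw [substC, substC, substV, substV]
    simp only [h0, h1]
    first
    | refine (congrArg (StepPlus _) ?_).mp (handle_app_numV_zero _ _)
      rw [subst1C_substC_liftS, substC_callF]
      simp only [consSub, h0, h1]
    | refine (congrArg (StepPlus _) ?_).mp (handle_app_numV_succ _ _ _)
      rw [substC_sub2_substC_liftS_liftS, substC_callF]
      simp only [consSub, h0, h1]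

theorem bumpF_f_self {N : ℕ} (e : REnv N) (j : Fin N) : (bumpF e j).f j = 0 :=
  if_pos rfl

theorem bumpF_f_of_ne {N : ℕ} (e : REnv N) {j j' : Fin N} (h : j' ≠ j) :
    (bumpF e j).f j' = e.f j' + 1 :=
  if_neg h

def stateFn {N : ℕ} (M : Fin N → MInstr N) (fuel : ℕ) (full : List (Fin N)) (e : REnv N)
    (j : Fin N) : Val :=
  .fix (.lam (.ret (.lam (mrecDefs M fuel full full ⟨fun j' => (bumpF e j).f j' + 2, 1, 0⟩
    (fun e' => instrC (M j) e')))))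

theorem mrecDefs_cons {N : ℕ} (M : Fin N → MInstr N) (fuel : ℕ) (full : List (Fin N))
    (j : Fin N) (td : List (Fin N)) (e : REnv N) (k : REnv N → Comp) :
    mrecDefs M (fuel + 1) full (j :: td) e k =
      .letin (.ret (stateFn M fuel (full.erase j) e j)) (mrecDefs M fuel full td (bumpF e j) k) :=
  rfl

/-- `V` is a runtime closure of `f_j`. The `mrec` sugar re-binds the functions of `full` inside
the body; the closure environment `γ` supplies all others. Each binding costs one unit of fuel
and each body restarts `mrec` on a list one shorter, so `length ^ 2 + length` fuel suffices. -/
inductive IsStateFn {N : ℕ} (M : Fin N → MInstr N) : Fin N → Val → Prop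
  | mk {j : Fin N} {fuel : ℕ} {full : List (Fin N)} {e : REnv N} {γ : ℕ → Val} :
      full.length ^ 2 + full.length ≤ fuel →
      (∀ j', j' ≠ j → j' ∉ full → IsStateFn M j' (γ (e.f j'))) →
      IsStateFn M j (substV γ (stateFn M fuel full e j))

theorem mrecDefs_stepStar {N : ℕ} (M : Fin N → MInstr N) (full : List (Fin N))
    (k : REnv N → Comp) :
    ∀ (todo : List (Fin N)) (fuel : ℕ) (e : REnv N) (γ : ℕ → Val),
      (∀ j ∈ todo, j ∈ full) → full.length ^ 2 + todo.length ≤ fuel →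
      (∀ j ∉ full, IsStateFn M j (γ (e.f j))) →
      ∃ (e' : REnv N) (γ' : ℕ → Val),
        StepStar (substC γ (mrecDefs M fuel full todo e k)) (substC γ' (k e')) ∧
        (∀ j, j ∈ todo ∨ IsStateFn M j (γ (e.f j)) → IsStateFn M j (γ' (e'.f j))) ∧
        γ' e'.x0 = γ e.x0 ∧ γ' e'.x1 = γ e.x1
  | [], fuel, e, γ, _, _, _ =>
    ⟨e, γ, by cases fuel <;> exact .refl, fun _ h => h.resolve_left List.not_mem_nil, rfl, rfl⟩
  | j :: td, fuel, e, γ, hsub, hfuel, hout => by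
    rw [List.length_cons] at hfuel
    obtain ⟨fuel, rfl⟩ : ∃ f, fuel = f + 1 := ⟨fuel - 1, by omega⟩
    have hj : j ∈ full := hsub j List.mem_cons_self
    set W := substV γ (stateFn M fuel (full.erase j) e j)
    have hW : IsStateFn M j W := by
      refine .mk ?_ fun j' hne hnot => hout j' fun hmem => hnot ((List.mem_erase_of_ne hne).2 hmem)
      have := List.length_erase_sq_add_le hj
      omega
    have hstep : Step (substC γ (mrecDefs M (fuel + 1) full (j :: td) e k))
        (substC (consSub W γ) (mrecDefs M fuel full td (bumpF e j) k)) := by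
      rw [mrecDefs_cons, ← subst1C_substC_liftS]
      exact .letret
    have hshift : ∀ j', j' ≠ j → consSub W γ ((bumpF e j).f j') = γ (e.f j') := fun j' hne => by
      rw [bumpF_f_of_ne e hne]; rfl
    obtain ⟨e', γ', hsteps, hfns, h0, h1⟩ :=
      mrecDefs_stepStar M full k td fuel (bumpF e j) (consSub W γ)
        (fun j' h => hsub j' (List.mem_cons_of_mem j h))
        (by omega)
        (fun j' hj' => hshift j' (fun h => hj' (h ▸ hj)) ▸ hout j' hj')
    refine ⟨e', γ', .head hstep hsteps, fun j' hj' => hfns j' ?_, h0, h1⟩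
    by_cases hne : j' = j
    · subst hne
      right
      rw [bumpF_f_self]
      exact hW
    · rcases hj' with hmem | hfn
      · exact .inl ((List.mem_cons.1 hmem).resolve_left hne)
      · exact .inr (hshift j' hne ▸ hfn)

theorem callV_fix_stepPlus (γ : ℕ → Val) (B : Comp) (va vb : Val) :
    let F := substV γ (.fix (.lam (.ret (.lam B))))
    StepPlus (callV F va vb) (substC (consSub vb (consSub va (consSub F γ))) B) := by
  intro F
  set D := Comp.app (.var 0) (renameV Nat.succ vb)
  set L := substC (liftS (consSub va (consSub F γ))) B
  have hunfold : subst1V (substV (liftS γ) (.lam (.ret (.lam B)))) F =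
      .lam (.ret (.lam (substC (liftS (liftS (consSub F γ))) B))) :=
    subst1V_substV_liftS γ _ F
  have happ : subst1C (.ret (.lam (substC (liftS (liftS (consSub F γ))) B))) va =
      .ret (.lam L) := by
    simp only [L, subst1C, substC, substV, substC_substC, substV_comp_liftS,
      substV_sub1_comp_liftS]
  have hlet : subst1C D (.lam L) = .app (.lam L) vb := by
    simp only [D, subst1C, substC, substV_sub1_renameV_succ]; rfl
  have s1 : Step (callV F va vb)
      (.letin (.app (.lam (.ret (.lam (substC (liftS (liftS (consSub F γ))) B)))) va) D) :=
    hunfold ▸ .letc .fixapp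
  have s2 : Step (.letin (.app (.lam (.ret (.lam (substC (liftS (liftS (consSub F γ))) B)))) va) D)
      (.letin (.ret (.lam L)) D) :=
    .letc (happ ▸ .lamapp)
  have s3 : Step (.letin (.ret (.lam L)) D) (.app (.lam L) vb) := hlet ▸ .letret
  have s4 : Step (.app (.lam L) vb) (substC (consSub vb (consSub va (consSub F γ))) B) :=
    subst1C_substC_liftS _ _ vb ▸ .lamapp
  exact ((((Relation.TransGen.single s1).tail s2).tail s3).tail s4)

theorem IsStateFn.callV_stepPlus {N : ℕ} {M : Fin N → MInstr N} {q : Fin N} {V : Val}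
    (hV : IsStateFn M q V) (va vb : Val) :
    ∃ (γ : ℕ → Val) (e : REnv N),
      StepPlus (callV V va vb) (substC γ (instrC (M q) e)) ∧
      (∀ j, IsStateFn M j (γ (e.f j))) ∧ γ e.x0 = va ∧ γ e.x1 = vb := by
  obtain @⟨_, fuel, full, e, γ, hfuel, hout⟩ := id hV
  set V := substV γ (stateFn M fuel full e q)
  have hbody : ∀ j ∉ full, IsStateFn M j (consSub vb (consSub va (consSub V γ))
      ((⟨fun j' => (bumpF e q).f j' + 2, 1, 0⟩ : REnv N).f j)) := by
    intro j hj
    by_cases hne : j = q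
    · subst hne
      show IsStateFn M j (consSub V γ ((bumpF e j).f j))
      rw [bumpF_f_self]
      exact hV
    · show IsStateFn M j (consSub V γ ((bumpF e q).f j))
      rw [bumpF_f_of_ne e hne]
      exact hout j hne hj
  obtain ⟨e', γ', hsteps, hfns, h0, h1⟩ :=
    mrecDefs_stepStar M full _ full fuel _ _ (fun _ => id) hfuel hbody
  refine ⟨γ', e', (callV_fix_stepPlus γ _ va vb).trans_left hsteps, fun j => hfns j ?_, h0, h1⟩
  by_cases hj : j ∈ full
  · exact .inl hj
  · exact .inr (hbody j hj)

def Encodes {N : ℕ} (M : Fin N → MInstr N) (cfg : MCfg N) (c : Comp) : Prop :=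
  ∃ V, IsStateFn M cfg.1 V ∧ c = callV V (numV cfg.2.1) (numV cfg.2.2)

theorem Encodes.exists_stepPlus {N : ℕ} {M : Fin N → MInstr N} {cfg cfg' : MCfg N} {c : Comp}
    (hc : Encodes M cfg c) (hstep : MStep M cfg cfg') :
    ∃ c', Encodes M cfg' c' ∧ StepPlus c c' := by
  obtain ⟨q, a, b⟩ := cfg
  obtain ⟨q', a', b'⟩ := cfg'
  obtain ⟨V, hV, rfl⟩ := hc
  obtain ⟨γ, e, hcall, hfns, h0, h1⟩ := hV.callV_stepPlus (numV a) (numV b)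
  exact ⟨_, ⟨_, hfns q', rfl⟩, hcall.trans (instrC_stepPlus h0 h1 hstep)⟩

theorem Encodes.exists_stepStar {N : ℕ} {M : Fin N → MInstr N} {cfg cfg' : MCfg N} {c : Comp}
    (hc : Encodes M cfg c) (hrun : Relation.ReflTransGen (MStep M) cfg cfg') :
    ∃ c', Encodes M cfg' c' ∧ StepStar c c' := by
  induction hrun with
  | refl => exact ⟨c, hc, .refl⟩
  | tail _ hstep ih =>
    obtain ⟨c₁, hc₁, hsteps⟩ := ih
    obtain ⟨c₂, hc₂, hplus⟩ := hc₁.exists_stepPlus hstep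
    exact ⟨c₂, hc₂, hsteps.trans hplus.to_reflTransGen⟩

theorem Encodes.stepPlus_of_halt {N : ℕ} {M : Fin N → MInstr N} {q : Fin N} {a b : ℕ}
    {c : Comp} (hc : Encodes M (q, a, b) c) (hq : M q = .halt) : StepPlus c (.ret .unit) := by
  obtain ⟨V, hV, rfl⟩ := hc
  obtain ⟨γ, e, hcall, -⟩ := hV.callV_stepPlus (numV a) (numV b)
  rwa [hq] at hcall

theorem encodeMM_fuel (N : ℕ) :
    (List.finRange (N + 1)).length ^ 2 + (List.finRange (N + 1)).length ≤ (N + 2) * (N + 2) := by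
  rw [List.length_finRange]; nlinarith

theorem encodeMM_stepStar_start {N : ℕ} (M : Fin (N + 1) → MInstr (N + 1)) :
    ∃ c₀, Encodes M (0, 0, 0) c₀ ∧ StepStar (encodeMM M) (.letin c₀ (.ret .tt)) := by
  obtain ⟨e', γ', hsteps, hfns, -⟩ :=
    mrecDefs_stepStar M _ _ _ _ _ Val.var (fun _ _ => List.mem_finRange _) (encodeMM_fuel N)
      (fun j hj => absurd (List.mem_finRange j) hj)
  refine ⟨_, ⟨_, hfns 0 (.inl (List.mem_finRange 0)), rfl⟩, ?_⟩
  rw [encodeMM, ← substC_var (mrecDefs ..)]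
  exact hsteps

theorem encodeMM_stepStar_of_halts {N : ℕ} {M : Fin (N + 1) → MInstr (N + 1)} (h : MHalts M) :
    StepStar (encodeMM M) (.ret .tt) := by
  obtain ⟨q, a, b, hrun, hhalt⟩ := h
  obtain ⟨c₀, hc₀, hstart⟩ := encodeMM_stepStar_start M
  obtain ⟨c, hc, hsteps⟩ := hc₀.exists_stepStar hrun
  have hrun' : StepStar c₀ (.ret .unit) := hsteps.trans (hc.stepPlus_of_halt hhalt).to_reflTransGen
  exact (hstart.trans (hrun'.letin _)).tail .letret

theorem MStep.exists_of_ne_halt {N : ℕ} (M : Fin N → MInstr N) {q : Fin N} (a b : ℕ)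
    (h : M q ≠ .halt) : ∃ cfg', MStep M (q, a, b) cfg' := by
  cases hq : M q with
  | halt => exact absurd hq h
  | inc i j =>
    match i with
    | 0 => exact ⟨_, .inc0 hq⟩
    | 1 => exact ⟨_, .inc1 hq⟩
  | dec i j m =>
    match i, a, b with
    | 0, 0, _ => exact ⟨_, .dec0z hq⟩
    | 0, _ + 1, _ => exact ⟨_, .dec0s hq⟩
    | 1, _, 0 => exact ⟨_, .dec1z hq⟩
    | 1, _, _ + 1 => exact ⟨_, .dec1s hq⟩

theorem halts_of_encodeMM_stepStar {N : ℕ} {M : Fin (N + 1) → MInstr (N + 1)}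
    (h : StepStar (encodeMM M) (.ret .tt)) : MHalts M := by
  by_contra hM
  obtain ⟨c₀, hc₀, hstart⟩ := encodeMM_stepStar_start M
  let I : Comp → Prop := fun d => ∃ cfg c, Relation.ReflTransGen (MStep M) (0, 0, 0) cfg ∧
    Encodes M cfg c ∧ d = .letin c (.ret .tt)
  have hprogress : ∀ d, I d → ∃ d', StepPlus d d' ∧ I d' := by
    rintro _ ⟨⟨q, a, b⟩, c, hrun, hc, rfl⟩
    obtain ⟨cfg', hstep⟩ := MStep.exists_of_ne_halt M a b fun hq => hM ⟨q, a, b, hrun, hq⟩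
    obtain ⟨c', hc', hplus⟩ := hc.exists_stepPlus hstep
    exact ⟨_, hplus.letin _, cfg', c', hrun.tail hstep, hc', rfl⟩
  obtain ⟨_, hstuck⟩ := Relation.ReflTransGen.exists_step_of_progress step_rightUnique hprogress
    hstart ⟨_, _, .refl, hc₀, rfl⟩ h
  nomatch hstuck

def regTy : STy := .arrow .unit .unit

def stateTy : STy := .arrow regTy (.arrow regTy .unit)

theorem SC.callF {I : ℕ → STy} {Γ : List STy} {fj a b : ℕ} (hf : Γ[fj]? = some stateTy)
    (ha : Γ[a]? = some regTy) (hb : Γ[b]? = some regTy) :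
    SC I SSmm Γ (callF fj a b) .unit :=
  .letin (.app (.var hf) (.var ha)) (.app (σ := regTy) (.var rfl) (.var hb))

theorem SC.instrC {I : ℕ → STy} {N : ℕ} (ins : MInstr N) (e : REnv N) {Γ : List STy}
    (hf : ∀ j, Γ[e.f j]? = some stateTy) (h0 : Γ[e.x0]? = some regTy)
    (h1 : Γ[e.x1]? = some regTy) :
    SC I SSmm Γ (instrC ins e) .unit := by
  cases ins with
  | halt => exact .ret .unit
  | inc i j =>
    match i with
    | 0 => exact .letin (.ret (.lam (.op (.var h0)))) (SC.callF (hf j) rfl h1)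
    | 1 => exact .letin (.ret (.lam (.op (.var h1)))) (SC.callF (hf j) h0 rfl)
  | dec i j m =>
    match i with
    | 0 =>
      exact .handle (σ := .unit) (SC.callF (hf j) h0 h1) (fun _ => SC.callF (hf m) rfl h1)
        (.app (.var h0) .unit)
    | 1 =>
      exact .handle (σ := .unit) (SC.callF (hf j) h0 h1) (fun _ => SC.callF (hf m) h0 rfl)
        (.app (.var h1) .unit)

theorem SC.mrecDefs {I : ℕ → STy} {N : ℕ} (M : Fin N → MInstr N) :
    ∀ (fuel : ℕ) (full todo : List (Fin N)) (e : REnv N) (Γ : List STy) (k : REnv N → Comp)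
      (σ : STy), (∀ j ∈ todo, j ∈ full) → full.length ^ 2 + todo.length ≤ fuel →
      (∀ j ∉ todo, Γ[e.f j]? = some stateTy) →
      (∀ e' Γ', (∀ j, Γ'[e'.f j]? = some stateTy) → Γ'[e'.x0]? = Γ[e.x0]? →
        Γ'[e'.x1]? = Γ[e.x1]? → SC I SSmm Γ' (k e') σ) →
      SC I SSmm Γ (mrecDefs M fuel full todo e k) σ
  | 0, full, [], e, Γ, k, σ, _, _, hf, hk | fuel + 1, full, [], e, Γ, k, σ, _, _, hf, hk =>
    hk e Γ (fun j => hf j List.not_mem_nil) rfl rfl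
  | 0, _, _ :: _, _, _, _, _, _, hfuel, _, _ => by simp at hfuel
  | fuel + 1, full, j :: td, e, Γ, k, σ, hsub, hfuel, hf, hk => by
    rw [List.length_cons] at hfuel
    have hj : j ∈ full := hsub j List.mem_cons_self
    have hf_out : ∀ j', j' ≠ j → j' ∉ td → Γ[e.f j']? = some stateTy := fun j' hne htd =>
      hf j' fun h => (List.mem_cons.1 h).elim hne htd
    refine .letin (σ := stateTy) (.ret (.fix (.lam (.ret (.lam ?_))))) ?_
    · refine SC.mrecDefs M fuel _ _ _ (regTy :: regTy :: stateTy :: Γ) _ _ (fun _ => id) ?_ ?_ ?_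
      · have := List.length_erase_sq_add_le hj
        omega
      · intro j' hj'
        by_cases hne : j' = j
        · subst hne
          show (regTy :: regTy :: stateTy :: Γ)[(bumpF e j').f j' + 2]? = _
          rw [bumpF_f_self]; rfl
        · show (regTy :: regTy :: stateTy :: Γ)[(bumpF e j).f j' + 2]? = _
          rw [bumpF_f_of_ne e hne]
          exact hf_out j' hne fun h => hj' ((List.mem_erase_of_ne hne).2 (hsub j' (.tail _ h)))
      · intro e' Γ' hf' h0 h1
        exact SC.instrC _ _ hf' h0 h1
    · refine SC.mrecDefs M fuel full td (bumpF e j) (stateTy :: Γ) k σ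
        (fun j' h => hsub j' (.tail _ h)) (by omega) ?_ hk
      intro j' hj'
      by_cases hne : j' = j
      · subst hne
        rw [bumpF_f_self]; rfl
      · rw [bumpF_f_of_ne e hne]
        exact hf_out j' hne hj'

theorem SC.encodeMM {I : ℕ → STy} {N : ℕ} (M : Fin (N + 1) → MInstr (N + 1)) :
    SC I SSmm [] (encodeMM M) .bool := by
  refine SC.mrecDefs M _ _ _ _ [] _ _ (fun _ _ => List.mem_finRange _) (encodeMM_fuel N)
    (fun j hj => absurd (List.mem_finRange j) hj) fun e' Γ' hf _ _ => ?_
  exact .letin (.letin (.app (.var (hf 0)) (.lam (.ret .unit)))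
    (.app (σ := regTy) (.var rfl) (.lam (.ret .unit)))) (.ret .tt)

/-- Reduction from the halting problem for 2-register Minsky machines to
    reachability for the class MM: each MM program is `⊢_ST`-typable, and the
    machine halts from `(q₀,0,0)` iff the corresponding program evaluates to
    `return true`.  (Hence reachability for `⊢_ST`-typable finitary PCF with
    effect handlers is undecidable.) -/
theorem mm_reduction (N : ℕ) (M : Fin (N+1) → MInstr (N+1)) :
    SC (fun _ => STy.unit) SSmm [] (encodeMM M) STy.bool ∧
    (MHalts M ↔ StepStar (encodeMM M) (Comp.ret Val.tt)) :=
  ⟨SC.encodeMM M, encodeMM_stepStar_of_halts, halts_of_encodeMM_stepStar⟩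

end LEH
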